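/- arXiv:2412.10725 — 2 statements merged into one kernel-verified Lean document; each statement's English description precedes it below -/
import Mathlib

section
/- Let Ω ⊆ ℝ³ be a helical domain (invariant under every H_θ) and let v = (v₁,v₂,v₃) : Ω → ℝ³ be a C¹ vector field. Then v is helical, i.e. v(H_θ(x)) = Q_θ v(x) for all θ ∈ ℝ and x ∈ Ω, if and only if ∇_ξ v = (v₂, −v₁, 0) on Ω, i.e. for each component i one has x₂ ∂_{x₁}v_i − x₁ ∂_{x₂}v_i + h ∂_{x₃}v_i equal to v₂, −v₁, 0 for i = 1, 2, 3 respectively. -/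
noncomputable section

open Real

/-- ℝ³ as functions `Fin 3 → ℝ`. -/
abbrev V3 := Fin 3 → ℝ

/-- Partial derivative `∂_{x_i} f` of a scalar function on ℝ³. -/
def pd3 (i : Fin 3) (f : V3 → ℝ) (x : V3) : ℝ := fderiv ℝ f x (Pi.single i 1)

/-- The helical transformation `H_θ(x) = Q_θ x + (0,0,hθ)`. -/
def Hmap (h θ : ℝ) (x : V3) : V3 :=
  ![x 0 * Real.cos θ + x 1 * Real.sin θ,
    -(x 0) * Real.sin θ + x 1 * Real.cos θ,
    x 2 + h * θ]

/-- The rotation `Q_θ = diag(R_θ, 1)` acting on vectors of ℝ³. -/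
def Qrot (θ : ℝ) (v : V3) : V3 :=
  ![v 0 * Real.cos θ + v 1 * Real.sin θ,
    -(v 0) * Real.sin θ + v 1 * Real.cos θ,
    v 2]

/-- The directional derivative `∇_ξ f = x₂ ∂₁ f − x₁ ∂₂ f + h ∂₃ f`. -/
def gradXi (h : ℝ) (f : V3 → ℝ) (x : V3) : ℝ :=
  x 1 * pd3 0 f x - x 0 * pd3 1 f x + h * pd3 2 f x

/-! Along the orbit `t ↦ H_t x` the field `v` is differentiated exactly by `∇_ξ`, so the PDE
`∇_ξ v = (v₂, −v₁, 0)` says that `γ(t) = v(H_t x)` solves `γ' = (γ₂, −γ₁, 0)`, the linear ODE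
whose flow is `Q_t`. Hence `v(H_θ x) = Q_θ v(x)`; conversely, differentiating this identity at
`θ = 0` gives the PDE. -/

/-- The generator `ξ` of `H_θ`; `xi 0 w = (w₂, −w₁, 0)` generates `Q_θ`. -/
def xi (h : ℝ) (x : V3) : V3 := ![x 1, -(x 0), h]

def gradXiVec (h : ℝ) (v : V3 → V3) (x : V3) : V3 := fun i => gradXi h (fun y => v y i) x

lemma Hmap_zero_right (h : ℝ) (x : V3) : Hmap h 0 x = x := by
  funext i; fin_cases i <;> simp [Hmap]

lemma Hmap_zero_left (θ : ℝ) : Hmap 0 θ = Qrot θ := by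
  funext x i; fin_cases i <;> simp [Hmap, Qrot]

lemma Qrot_zero (w : V3) : Qrot 0 w = w := by
  rw [← Hmap_zero_left, Hmap_zero_right]

lemma gradXi_eq_fderiv (h : ℝ) (f : V3 → ℝ) (x : V3) :
    gradXi h f x = fderiv ℝ f x (xi h x) := by
  have hxi : xi h x = x 1 • Pi.single 0 1 + (-(x 0)) • Pi.single 1 1 + h • Pi.single 2 1 := by
    funext i; fin_cases i <;> simp [xi]
  rw [hxi]
  simp only [map_add, map_smul, smul_eq_mul, gradXi, pd3]
  ring

lemma gradXiVec_eq_xi_zero_iff (h : ℝ) (v : V3 → V3) (x : V3) :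
    gradXiVec h v x = xi 0 (v x) ↔
      gradXi h (fun y => v y 0) x = v x 1 ∧
      gradXi h (fun y => v y 1) x = -(v x 0) ∧
      gradXi h (fun y => v y 2) x = 0 := by
  simp only [funext_iff, Fin.forall_fin_succ, IsEmpty.forall_iff, and_true]
  simp [gradXiVec, xi]

lemma hasDerivAt_Hmap (h : ℝ) (x : V3) (θ : ℝ) :
    HasDerivAt (fun t => Hmap h t x) (xi h (Hmap h θ x)) θ := by
  rw [hasDerivAt_pi]
  intro i
  fin_cases i
  · exact (((hasDerivAt_cos θ).const_mul (x 0)).add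
      ((hasDerivAt_sin θ).const_mul (x 1))).congr_deriv (by simp [Hmap, xi])
  · exact (((hasDerivAt_sin θ).const_mul (-(x 0))).add
      ((hasDerivAt_cos θ).const_mul (x 1))).congr_deriv (by simp [Hmap, xi]; ring)
  · exact (((hasDerivAt_id θ).const_mul h).const_add (x 2)).congr_deriv (by simp [xi])

lemma hasDerivAt_Qrot (w : V3) (θ : ℝ) :
    HasDerivAt (fun t => Qrot t w) (xi 0 (Qrot θ w)) θ := by
  simpa only [Hmap_zero_left] using hasDerivAt_Hmap 0 w θ

lemma hasDerivAt_comp_Hmap (h : ℝ) (x : V3) (θ : ℝ) (v : V3 → V3)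
    (hv : ∀ i, DifferentiableAt ℝ (fun y => v y i) (Hmap h θ x)) :
    HasDerivAt (fun t => v (Hmap h t x)) (gradXiVec h v (Hmap h θ x)) θ := by
  rw [hasDerivAt_pi]
  intro i
  rw [gradXiVec, gradXi_eq_fderiv]
  exact (hv i).hasFDerivAt.comp_hasDerivAt θ (hasDerivAt_Hmap h x θ)

lemma eq_Qrot_of_hasDerivAt {γ : ℝ → V3} (hγ : ∀ t, HasDerivAt γ (xi 0 (γ t)) t) (θ : ℝ) :
    γ θ = Qrot θ (γ 0) := by
  have hγi : ∀ i t, HasDerivAt (fun s => γ s i) (xi 0 (γ t) i) t :=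
    fun i t => hasDerivAt_pi.1 (hγ t) i
  -- the components of `Q_{-t} γ(t)` are constant
  have const_of_deriv_zero : ∀ f : ℝ → ℝ, (∀ t, HasDerivAt f 0 t) → f θ = f 0 :=
    fun f hf =>
      is_const_of_deriv_eq_zero (fun t => (hf t).differentiableAt) (fun t => (hf t).deriv) θ 0
  have c0 := const_of_deriv_zero (fun s => γ s 0 * cos s - γ s 1 * sin s) fun t =>
    (((hγi 0 t).mul (hasDerivAt_cos t)).sub ((hγi 1 t).mul (hasDerivAt_sin t))).congr_deriv
      (by simp [xi]; ring)
  have c1 := const_of_deriv_zero (fun s => γ s 0 * sin s + γ s 1 * cos s) fun t =>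
    (((hγi 0 t).mul (hasDerivAt_sin t)).add ((hγi 1 t).mul (hasDerivAt_cos t))).congr_deriv
      (by simp [xi])
  have c2 := const_of_deriv_zero (fun s => γ s 2) fun t => by simpa [xi] using hγi 2 t
  simp only [cos_zero, sin_zero, mul_one, mul_zero, sub_zero, zero_add] at c0 c1 c2
  funext i
  fin_cases i
  · simp only [Qrot, Fin.zero_eta, Matrix.cons_val_zero]
    linear_combination cos θ * c0 + sin θ * c1 - γ θ 0 * sin_sq_add_cos_sq θ
  · simp only [Qrot, Fin.mk_one, Matrix.cons_val_one, Matrix.cons_val_zero]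
    linear_combination -sin θ * c0 + cos θ * c1 - γ θ 1 * sin_sq_add_cos_sq θ
  · simpa [Qrot] using c2

theorem helical_field_iff_general (h : ℝ) (Ω : Set V3) (hΩopen : IsOpen Ω)
    (hΩ : ∀ θ : ℝ, Hmap h θ '' Ω = Ω)
    (v : V3 → V3) (hv : ∀ i : Fin 3, ContDiffOn ℝ 1 (fun x => v x i) Ω) :
    (∀ θ : ℝ, ∀ x ∈ Ω, v (Hmap h θ x) = Qrot θ (v x)) ↔
      (∀ x ∈ Ω,
        gradXi h (fun y => v y 0) x = v x 1 ∧
        gradXi h (fun y => v y 1) x = -(v x 0) ∧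
        gradXi h (fun y => v y 2) x = 0) := by
  have hdiff : ∀ y ∈ Ω, ∀ i, DifferentiableAt ℝ (fun z => v z i) y :=
    fun y hy i => ((hv i).differentiableOn one_ne_zero).differentiableAt (hΩopen.mem_nhds hy)
  have horbit : ∀ x ∈ Ω, ∀ t, Hmap h t x ∈ Ω := fun x hx t => hΩ t ▸ Set.mem_image_of_mem _ hx
  simp only [← gradXiVec_eq_xi_zero_iff]
  constructor
  · intro hhel x hx
    have hchain := hasDerivAt_comp_Hmap h x 0 v (by rw [Hmap_zero_right]; exact hdiff x hx)
    have hrot : HasDerivAt (fun t => v (Hmap h t x)) (xi 0 (v x)) 0 := by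
      rw [show (fun t => v (Hmap h t x)) = fun t => Qrot t (v x) from funext fun t => hhel t x hx]
      simpa only [Qrot_zero] using hasDerivAt_Qrot (v x) 0
    rw [Hmap_zero_right] at hchain
    exact hchain.unique hrot
  · intro hpde θ x hx
    have hγ : ∀ t, HasDerivAt (fun t => v (Hmap h t x)) (xi 0 (v (Hmap h t x))) t := fun t =>
      hpde _ (horbit x hx t) ▸ hasDerivAt_comp_Hmap h x t v (hdiff _ (horbit x hx t))
    simpa only [Hmap_zero_right] using eq_Qrot_of_hasDerivAt hγ θ

/-- A C¹ vector field on a helical domain `Ω` is helical iff `∇_ξ v = (v₂, −v₁, 0)` on `Ω`. -/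
theorem helical_field_iff (h : ℝ) (hh : 0 < h) (Ω : Set V3) (hΩopen : IsOpen Ω)
    (hΩ : ∀ θ : ℝ, Hmap h θ '' Ω = Ω)
    (v : V3 → V3) (hv : ∀ i : Fin 3, ContDiffOn ℝ 1 (fun x => v x i) Ω) :
    (∀ θ : ℝ, ∀ x ∈ Ω, v (Hmap h θ x) = Qrot θ (v x)) ↔
      (∀ x ∈ Ω,
        gradXi h (fun y => v y 0) x = v x 1 ∧
        gradXi h (fun y => v y 1) x = -(v x 0) ∧
        gradXi h (fun y => v y 2) x = 0) :=
  helical_field_iff_general h Ω hΩopen hΩ v hv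
end
end

section
/- Fix h > 0, a > 0, b ≥ 0, ᾱ ≥ 0 and ε ∈ (0,1). For r ≥ 0 and t ∈ ℝ let i_ε(r,t) = 2h²aε t₊/(h²+r²)² + a² t₊/(h²+r²) + (h²ᾱaε/(h²+r²)) 1_{t>0} + b 1_{t>0}, and I_ε(r,s) = ∫₀^s i_ε(r,τ) dτ. Then for every r ≥ 0 and s > 0, sup_{t∈ℝ} [s t − I_ε(r,t)] = (h²+r²)² ((s − h²ᾱaε/(h²+r²) − b)₊)² / (4h²aε + 2a²(h²+r²)), where t₊ = max{t,0} and 1_{t>0} is the indicator of {t > 0}. -/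
noncomputable section

open Real MeasureTheory

/-- The vorticity profile function `i_ε(r,t)`. -/
def iProfile (h a b alphaBar ε : ℝ) (r t : ℝ) : ℝ :=
  2 * h ^ 2 * a * ε * max t 0 / (h ^ 2 + r ^ 2) ^ 2
    + a ^ 2 * max t 0 / (h ^ 2 + r ^ 2)
    + (h ^ 2 * alphaBar * a * ε / (h ^ 2 + r ^ 2)) * (if 0 < t then 1 else 0)
    + b * (if 0 < t then 1 else 0)

/-- Its primitive `I_ε(r,s) = ∫₀^s i_ε(r,τ) dτ`. -/
def IProfile (h a b alphaBar ε : ℝ) (r s : ℝ) : ℝ :=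
  ∫ τ in (0 : ℝ)..s, iProfile h a b alphaBar ε r τ

/-- The Legendre-type conjugate of `I_ε(r,·)` at `s > 0` equals the explicit
quadratic expression `J_ε(r,s)`. -/
theorem conjugate_of_profile (h a b alphaBar ε : ℝ)
    (hh : 0 < h) (ha : 0 < a) (hb : 0 ≤ b) (halpha : 0 ≤ alphaBar)
    (hε : ε ∈ Set.Ioo (0 : ℝ) 1) :
    ∀ r ≥ (0 : ℝ), ∀ s > (0 : ℝ),
      (⨆ t : ℝ, (s * t - IProfile h a b alphaBar ε r t)) =
        (h ^ 2 + r ^ 2) ^ 2 *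
            (max (s - h ^ 2 * alphaBar * a * ε / (h ^ 2 + r ^ 2) - b) 0) ^ 2 /
          (4 * h ^ 2 * a * ε + 2 * a ^ 2 * (h ^ 2 + r ^ 2)) := by
  rintro r hr s hs
  obtain ⟨hε0, hε1⟩ := hε
  have hD0 : 0 < h ^ 2 + r ^ 2 := by positivity
  set D := h ^ 2 + r ^ 2 with hDdef
  set A := 2 * h ^ 2 * a * ε / D ^ 2 + a ^ 2 / D with hAdef
  set B := h ^ 2 * alphaBar * a * ε / D + b with hBdef
  have hA0 : 0 < A := by positivity
  have hB0 : 0 ≤ B := by positivity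
  -- Explicit formula for IProfile
  have hI : ∀ t : ℝ, IProfile h a b alphaBar ε r t
      = A * (max t 0) ^ 2 / 2 + B * max t 0 := by
    intro t
    rcases le_or_gt t 0 with ht | ht
    · rw [max_eq_right ht]
      unfold IProfile
      rw [intervalIntegral.integral_congr_ae (g := fun _ => (0 : ℝ))]
      · simp
      · filter_upwards with τ hτ
        rw [Set.uIoc_comm, Set.uIoc_of_le ht] at hτ
        have hτ0 : τ ≤ 0 := hτ.2
        unfold iProfile
        rw [max_eq_right hτ0, if_neg (not_lt.mpr hτ0)]
        ring
    · rw [max_eq_left ht.le]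
      unfold IProfile
      rw [intervalIntegral.integral_congr_ae (g := fun τ => A * τ + B)]
      · have h1 : IntervalIntegrable (fun x : ℝ => A * x) MeasureTheory.volume 0 t :=
          (continuous_const.mul continuous_id').intervalIntegrable _ _
        have h2 : IntervalIntegrable (fun _ : ℝ => B) MeasureTheory.volume 0 t :=
          intervalIntegrable_const
        rw [show (fun τ : ℝ => A * τ + B) = (fun τ : ℝ => (fun x : ℝ => A * x) τ + (fun _ : ℝ => B) τ) from rfl,
          intervalIntegral.integral_add h1 h2, intervalIntegral.integral_const_mul]
        simp
        ring
      · filter_upwards with τ hτ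
        rw [Set.uIoc_of_le ht.le] at hτ
        have hτ0 : 0 < τ := hτ.1
        unfold iProfile
        rw [max_eq_left hτ0.le, if_pos hτ0, hAdef, hBdef]
        field_simp
        ring
  set m := max (s - B) 0 with hmdef
  have hm0 : 0 ≤ m := le_max_right _ _
  clear_value m A B
  -- upper bound
  have hle : ∀ t : ℝ, s * t - IProfile h a b alphaBar ε r t ≤ m ^ 2 / (2 * A) := by
    intro t
    rw [hI t]
    rcases le_or_gt t 0 with ht | ht
    · rw [max_eq_right ht]
      have : s * t ≤ 0 := mul_nonpos_of_nonneg_of_nonpos hs.le ht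
      have h2 : 0 ≤ m ^ 2 / (2 * A) := by positivity
      nlinarith
    · rw [max_eq_left ht.le, sub_le_iff_le_add, div_add' _ _ _ (by positivity : (2:ℝ)*A ≠ 0),
        le_div_iff₀ (by positivity)]
      have hsm : s - B ≤ m := by rw [hmdef]; exact le_max_left _ _
      nlinarith [sq_nonneg (A * t - m), mul_le_mul_of_nonneg_left (mul_le_mul_of_nonneg_right hsm ht.le) hA0.le]
  -- value attained at t₀ = m / A
  have hattain : s * (m / A) - IProfile h a b alphaBar ε r (m / A) = m ^ 2 / (2 * A) := by
    rw [hI, max_eq_left (div_nonneg hm0 hA0.le)]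
    rcases le_or_gt (s - B) 0 with hsb | hsb
    · rw [hmdef, max_eq_right hsb]
      simp
    · rw [hmdef, max_eq_left hsb.le]
      field_simp
      ring
  have hbdd : BddAbove (Set.range fun t : ℝ => s * t - IProfile h a b alphaBar ε r t) := by
    refine ⟨m ^ 2 / (2 * A), ?_⟩
    rintro _ ⟨t, rfl⟩
    exact hle t
  have hsup : (⨆ t : ℝ, (s * t - IProfile h a b alphaBar ε r t)) = m ^ 2 / (2 * A) := by
    apply le_antisymm (ciSup_le hle)
    calc m ^ 2 / (2 * A) = s * (m / A) - IProfile h a b alphaBar ε r (m / A) := hattain.symm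
      _ ≤ _ := le_ciSup hbdd (m / A)
  rw [hsup]
  have hden : (0:ℝ) < 4 * h ^ 2 * a * ε + 2 * a ^ 2 * D := by positivity
  rw [hmdef, hBdef]
  have : s - (h ^ 2 * alphaBar * a * ε / D + b) = s - h ^ 2 * alphaBar * a * ε / D - b := by ring
  rw [this, hAdef]
  field_simp
  ring
end
end
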